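/- Let C be an unmixed clutter with a perfect matching e_1,…,e_g of König type. If C has no cycles of length 3 or 4, then the independence complex Δ_C is pure shellable. -/

import Mathlib

variable {V : Type} [Fintype V] [DecidableEq V]

/-- A clutter: a family of finsets (edges), none of which contains another. -/
def IsClutter (E : Set (Finset V)) : Prop :=
  ∀ e ∈ E, ∀ f ∈ E, e ⊆ f → e = f

/-- A vertex cover: a set of vertices meeting every edge. -/
def IsVertexCover (E : Set (Finset V)) (C : Finset V) : Prop :=
  ∀ e ∈ E, (e ∩ C).Nonempty

/-- A minimal vertex cover. -/
def IsMinimalVertexCover (E : Set (Finset V)) (C : Finset V) : Prop :=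
  IsVertexCover E C ∧ ∀ D ⊂ C, ¬ IsVertexCover E D

/-- The covering number: minimum cardinality of a vertex cover. -/
noncomputable def coveringNumber (E : Set (Finset V)) : ℕ :=
  sInf {n : ℕ | ∃ C : Finset V, IsVertexCover E C ∧ C.card = n}

/-- Unmixed: all minimal vertex covers have the same cardinality. -/
def Unmixed (E : Set (Finset V)) : Prop :=
  ∀ C D : Finset V, IsMinimalVertexCover E C → IsMinimalVertexCover E D →
    C.card = D.card

/-- A matching: a set of pairwise disjoint edges. -/
def IsMatching (E : Set (Finset V)) (M : Finset (Finset V)) : Prop :=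
  ↑M ⊆ E ∧ (M : Set (Finset V)).Pairwise Disjoint

/-- The König property: the maximum size of a matching equals the covering number. -/
def HasKonigProperty (E : Set (Finset V)) : Prop :=
  (∃ M : Finset (Finset V), IsMatching E M ∧ M.card = coveringNumber E) ∧
  ∀ M : Finset (Finset V), IsMatching E M → M.card ≤ coveringNumber E

/-- A perfect matching of König type: pairwise disjoint edges `em 0, …, em (g-1)`
whose union is the whole vertex set, where `g` is the covering number. -/
def IsPerfectMatchingKT (E : Set (Finset V)) {g : ℕ} (em : Fin g → Finset V) : Prop :=
  (∀ i, em i ∈ E) ∧ (∀ i j, i ≠ j → Disjoint (em i) (em j)) ∧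
  (∀ x : V, ∃ i, x ∈ em i) ∧ g = coveringNumber E

/-- An independent set: contains no edge. -/
def IsIndependentSet (E : Set (Finset V)) (F : Finset V) : Prop :=
  ∀ e ∈ E, ¬ e ⊆ F

/-- A facet of the independence complex: a maximal independent set. -/
def IsFacet (E : Set (Finset V)) (F : Finset V) : Prop :=
  IsIndependentSet E F ∧ ∀ G : Finset V, IsIndependentSet E G → F ⊆ G → F = G

/-- The set of facets of the independence complex of a clutter. -/
def cFacets (E : Set (Finset V)) : Set (Finset V) := {F | IsFacet E F}

/-- `F : Fin s → Finset V` is a shelling order of the family of facets `Fac`. -/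
def IsShelling {s : ℕ} (Fac : Set (Finset V)) (F : Fin s → Finset V) : Prop :=
  Function.Injective F ∧ (∀ G : Finset V, G ∈ Fac ↔ ∃ i, F i = G) ∧
  ∀ i j : Fin s, i < j →
    ∃ v ∈ F j \ F i, ∃ l : Fin s, l < j ∧ F j \ F l = {v}

/-- A family of facets is shellable if it admits a shelling order. -/
def Shellable (Fac : Set (Finset V)) : Prop :=
  ∃ (s : ℕ) (F : Fin s → Finset V), IsShelling Fac F

/-- A family of facets is pure if all its members have the same cardinality. -/
def PureFamily (Fac : Set (Finset V)) : Prop :=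
  ∀ F ∈ Fac, ∀ G ∈ Fac, F.card = G.card

/-- Pure shellable: pure and shellable. -/
def PureShellable (Fac : Set (Finset V)) : Prop :=
  PureFamily Fac ∧ Shellable Fac

/-- A free vertex: a vertex belonging to exactly one edge. -/
def HasFreeVertex (E : Set (Finset V)) : Prop :=
  ∃ x : V, ∃ e ∈ E, x ∈ e ∧ ∀ f ∈ E, x ∈ f → f = e

/-- A cycle of length `r`: `r` distinct vertices and `r` distinct edges such that each
of the vertices lies in exactly two of the edges and each of the edges contains exactly
two of the vertices. -/
def HasCycleOfLength (E : Set (Finset V)) (r : ℕ) : Prop :=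
  ∃ (v : Fin r → V) (f : Fin r → Finset V),
    Function.Injective v ∧ Function.Injective f ∧ (∀ j, f j ∈ E) ∧
    (∀ i : Fin r, (Finset.univ.filter (fun j => v i ∈ f j)).card = 2) ∧
    (∀ j : Fin r, (Finset.univ.filter (fun i => v i ∈ f j)).card = 2)

/-!
Facets are the complements of minimal vertex covers. As the clutter is unmixed and `g` is its
covering number, a minimal cover meets every matching edge `em i` in exactly one vertex, so the
facets correspond to the transversals `σ` (with `σ i ∈ em i`) whose image is a vertex cover.
Without 3- and 4-cycles the sets of edges through two vertices of the same `em i` are nested: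
otherwise some minimal cover would contain both vertices. Rank the vertices by decreasing
degree and the transversals lexicographically. If `σ` precedes `τ`, at some coordinate `k` the
vertex `σ k` lies on every edge through `τ k`, so replacing `τ k` by `σ k` gives an earlier
cover whose facet differs from that of `τ` in the single vertex `σ k`.
-/

set_option linter.unusedSectionVars false

open Finset Function

section Covers

variable {E : Set (Finset V)}

lemma isVertexCover_compl_iff {F : Finset V} : IsVertexCover E Fᶜ ↔ IsIndependentSet E F :=
  forall₂_congr fun e _ => by
    rw [← not_disjoint_iff_nonempty_inter, disjoint_compl_right_iff]

lemma isFacet_iff_isMinimalVertexCover_compl {F : Finset V} :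
    IsFacet E F ↔ IsMinimalVertexCover E Fᶜ := by
  rw [IsFacet, IsMinimalVertexCover, isVertexCover_compl_iff]
  refine and_congr_right fun _ => ⟨fun hmax D hD hDcov => ?_, fun hmin G hG hFG => ?_⟩
  · rw [← compl_compl D, isVertexCover_compl_iff] at hDcov
    exact hD.ne (by rw [hmax _ hDcov (subset_compl_comm.mp hD.subset), compl_compl])
  · by_contra hne
    exact hmin Gᶜ (compl_ssubset_compl.mpr (hFG.ssubset_of_ne hne))
      (isVertexCover_compl_iff.mpr hG)

lemma exists_isMinimalVertexCover_subset {C : Finset V} (hC : IsVertexCover E C) :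
    ∃ M ⊆ C, IsMinimalVertexCover E M := by
  obtain ⟨M, hMC, hM⟩ := exists_minimal_le_of_wellFoundedLT (IsVertexCover E) C hC
  exact ⟨M, hMC, hM.prop, fun D hDM hD => hDM.not_ge (hM.le_of_le hD hDM.le)⟩

lemma coveringNumber_le_card {C : Finset V} (hC : IsVertexCover E C) :
    coveringNumber E ≤ C.card :=
  Nat.sInf_le ⟨C, hC, rfl⟩

lemma Unmixed.card_eq_coveringNumber (hunmixed : Unmixed E) {M : Finset V}
    (hM : IsMinimalVertexCover E M) : M.card = coveringNumber E := by
  obtain ⟨C, hC, hCcard⟩ : coveringNumber E ∈ {n | ∃ C, IsVertexCover E C ∧ C.card = n} :=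
    Nat.sInf_mem ⟨_, M, hM.1, rfl⟩
  have hCmin : IsMinimalVertexCover E C :=
    ⟨hC, fun D hDC hD => (card_lt_card hDC).not_ge (hCcard ▸ coveringNumber_le_card hD)⟩
  rw [hunmixed M C hM hCmin, hCcard]

lemma Unmixed.pureFamily_cFacets (hunmixed : Unmixed E) : PureFamily (cFacets E) :=
  fun F hF G hG => by
    have := hunmixed _ _ (isFacet_iff_isMinimalVertexCover_compl.mp hF)
      (isFacet_iff_isMinimalVertexCover_compl.mp hG)
    rw [card_compl, card_compl] at this
    have := card_le_univ F
    have := card_le_univ G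
    omega

end Covers

section Cycles

variable {E : Set (Finset V)}

lemma hasCycleOfLength_of_mem_iff {n : ℕ} (v : Fin (n + 3) → V) (f : Fin (n + 3) → Finset V)
    (hf : ∀ j, f j ∈ E) (hvf : ∀ i j, v i ∈ f j ↔ j = i ∨ j = i + 1) :
    HasCycleOfLength E (n + 3) := by
  have one_ne : ∀ a : Fin (n + 3), a + 1 ≠ a := fun a h => by
    simpa [Fin.ext_iff] using add_eq_left.mp h
  have two_ne : ∀ a : Fin (n + 3), a + 1 + 1 ≠ a := fun a h => by
    rw [add_assoc, add_eq_left, Fin.ext_iff] at h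
    simp only [Fin.val_add, Fin.val_one, Fin.val_zero] at h
    rw [Nat.mod_eq_of_lt (by omega)] at h
    exact two_ne_zero h
  refine ⟨v, f, fun a b hab => ?_, fun a b hab => ?_, hf, fun i => ?_, fun j => ?_⟩
  · have h1 := (hvf b a).mp (hab ▸ (hvf a a).mpr (.inl rfl))
    have h2 := (hvf b (a + 1)).mp (hab ▸ (hvf a (a + 1)).mpr (.inr rfl))
    grind
  · have h1 := (hvf a b).mp (hab ▸ (hvf a a).mpr (.inl rfl))
    have h2 := (hvf (a - 1) b).mp (hab ▸ (hvf (a - 1) a).mpr (.inr (sub_add_cancel a 1).symm))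
    grind
  · rw [filter_congr fun j _ => hvf i j, filter_or, filter_eq', filter_eq', if_pos (mem_univ _),
      if_pos (mem_univ _), ← insert_eq, card_pair (one_ne i).symm]
  · have (i : Fin (n + 3)) : (j = i ∨ j = i + 1) ↔ (i = j ∨ i = j - 1) := by
      rw [eq_sub_iff_add_eq, eq_comm (a := j), eq_comm (a := j)]
    rw [filter_congr fun i _ => (hvf i j).trans (this i), filter_or, filter_eq', filter_eq',
      if_pos (mem_univ _), if_pos (mem_univ _), ← insert_eq, card_pair]
    exact fun h => one_ne (j - 1) (by rw [sub_add_cancel, ← h])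

lemma not_subset_union_of_mem (hclut : IsClutter E) (h3 : ¬ HasCycleOfLength E 3)
    {e f h : Finset V} (he : e ∈ E) (hf : f ∈ E) (hh : h ∈ E) {u : V} (hue : u ∈ e)
    (huf : u ∈ f) (huh : u ∉ h) : ¬ h ⊆ e ∪ f := by
  intro hsub
  obtain ⟨w, hwh, hwf⟩ := not_subset.mp fun hhf => huh (hclut h hh f hf hhf ▸ huf)
  obtain ⟨c, hch, hce⟩ := not_subset.mp fun hhe => huh (hclut h hh e he hhe ▸ hue)
  have hwe : w ∈ e := (mem_union.mp (hsub hwh)).resolve_right hwf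
  have hcf : c ∈ f := (mem_union.mp (hsub hch)).resolve_left hce
  refine h3 (hasCycleOfLength_of_mem_iff (n := 0) ![w, c, u] ![e, h, f] ?_ ?_)
  · intro j; fin_cases j <;> assumption
  · intro i j; fin_cases i <;> fin_cases j <;> simp [*]

lemma exists_isMinimalVertexCover_mem_mem (hclut : IsClutter E) (h3 : ¬ HasCycleOfLength E 3)
    (h4 : ¬ HasCycleOfLength E 4) {e f f' : Finset V} (he : e ∈ E) (hf : f ∈ E) (hf' : f' ∈ E)
    {u v : V} (hue : u ∈ e) (hve : v ∈ e) (huf : u ∈ f) (hvf : v ∉ f) (hvf' : v ∈ f')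
    (huf' : u ∉ f') : ∃ M, IsMinimalVertexCover E M ∧ u ∈ M ∧ v ∈ M := by
  set D := insert u (insert v (f ∪ f')ᶜ) with hD
  -- An edge `h` missing `D` lies in `f ∪ f'`; it contains a vertex `c ∈ f \ (e ∪ f')` and
  -- a vertex `c' ∈ f' \ (e ∪ f)`, which close the square `u c c' v` on the edges `f h f' e`.
  have hD_cover : IsVertexCover E D := by
    intro h hh
    by_contra hhD
    have hD_h : ∀ x ∈ h, x ∉ D := fun x hxh hxD => hhD ⟨x, mem_inter.mpr ⟨hxh, hxD⟩⟩
    have huh : u ∉ h := fun hu => hD_h u hu (by simp [hD])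
    have hvh : v ∉ h := fun hv => hD_h v hv (by simp [hD])
    have hsub : h ⊆ f ∪ f' := fun x hx => by_contra fun hx' =>
      hD_h x hx (mem_insert_of_mem (mem_insert_of_mem (mem_compl.mpr hx')))
    obtain ⟨c', hc'h, hc'⟩ := not_subset.mp (not_subset_union_of_mem hclut h3 he hf hh hue huf huh)
    obtain ⟨c, hch, hc⟩ := not_subset.mp (not_subset_union_of_mem hclut h3 he hf' hh hve hvf' hvh)
    simp only [mem_union, not_or] at hc hc'
    have hcf : c ∈ f := (mem_union.mp (hsub hch)).resolve_right hc.2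
    have hc'f' : c' ∈ f' := (mem_union.mp (hsub hc'h)).resolve_left hc'.2
    refine h4 (hasCycleOfLength_of_mem_iff (n := 1) ![u, c, c', v] ![e, f, h, f'] ?_ ?_)
    · intro j; fin_cases j <;> assumption
    · intro i j; fin_cases i <;> fin_cases j <;> simp [*]
  obtain ⟨M, hMD, hM⟩ := exists_isMinimalVertexCover_subset hD_cover
  have mem_of_cover : ∀ {g : Finset V} {x : V}, g ∈ E → (∀ y ∈ D, y ∈ g → y = x) → x ∈ M :=
    fun hg hx => by
      obtain ⟨y, hy⟩ := hM.1 _ hg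
      rw [mem_inter] at hy
      exact hx y (hMD hy.2) hy.1 ▸ hy.2
  refine ⟨M, hM, mem_of_cover hf fun y hy hyf => ?_, mem_of_cover hf' fun y hy hyf' => ?_⟩
  · simp only [hD, mem_insert, mem_compl, mem_union] at hy; grind
  · simp only [hD, mem_insert, mem_compl, mem_union] at hy; grind

end Cycles

def incidentEdges (E : Set (Finset V)) (u : V) : Set (Finset V) := {f | f ∈ E ∧ u ∈ f}

section Transversals

variable {ι : Type*} [Fintype ι] {E : Set (Finset V)} {em : ι → Finset V}

def coveringTransversals (E : Set (Finset V)) (em : ι → Finset V) : Set (ι → V) :=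
  {σ | (∀ i, σ i ∈ em i) ∧ IsVertexCover E (univ.image σ)}

lemma sum_card_inter_eq_card (hdisj : Pairwise (Disjoint on em)) (hcover : ∀ x, ∃ i, x ∈ em i)
    (M : Finset V) : ∑ i, (em i ∩ M).card = M.card := by
  rw [← card_biUnion fun i _ j _ hij => (hdisj hij).mono inter_subset_left inter_subset_left]
  congr 1
  ext x
  simpa using fun _ => hcover x

lemma mem_image_iff_eq_of_mem (hdisj : Pairwise (Disjoint on em)) {σ : ι → V}
    (hσ : ∀ i, σ i ∈ em i) {k : ι} {w : V} (hw : w ∈ em k) : w ∈ univ.image σ ↔ w = σ k := by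
  refine ⟨fun h => ?_, fun h => h ▸ mem_image_of_mem σ (mem_univ k)⟩
  obtain ⟨j, -, rfl⟩ := mem_image.mp h
  obtain rfl : j = k := by_contra fun hjk => disjoint_left.mp (hdisj hjk) (hσ j) hw
  rfl

lemma image_update_sdiff_image [DecidableEq ι] {τ : ι → V} {w : V} (hw : w ∉ univ.image τ)
    (k : ι) : univ.image (update τ k w) \ univ.image τ = {w} := by
  ext x
  simp only [mem_sdiff, mem_image, mem_univ, true_and, mem_singleton]
  constructor
  · rintro ⟨⟨j, rfl⟩, hj⟩
    by_cases hjk : j = k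
    · rw [hjk, update_self]
    · exact absurd ⟨j, (update_of_ne hjk w τ).symm⟩ hj
  · rintro rfl
    exact ⟨⟨k, update_self k x τ⟩, by simpa using hw⟩

lemma IsVertexCover.image_update [DecidableEq ι] {τ : ι → V}
    (hτ : IsVertexCover E (univ.image τ)) {k : ι} {w : V}
    (hkw : incidentEdges E (τ k) ⊆ incidentEdges E w) :
    IsVertexCover E (univ.image (update τ k w)) := by
  intro f hf
  obtain ⟨x, hx⟩ := hτ f hf
  simp only [mem_inter, mem_image, mem_univ, true_and] at hx
  obtain ⟨hxf, j, rfl⟩ := hx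
  by_cases hjk : j = k
  · subst hjk
    exact ⟨w, mem_inter.mpr ⟨(hkw ⟨hf, hxf⟩).2, mem_image.mpr ⟨j, mem_univ j, update_self j w τ⟩⟩⟩
  · exact ⟨τ j, mem_inter.mpr ⟨hxf, mem_image.mpr ⟨j, mem_univ j, update_of_ne hjk w τ⟩⟩⟩

lemma isMinimalVertexCover_image (hmem : ∀ i, em i ∈ E) (hdisj : Pairwise (Disjoint on em))
    {σ : ι → V} (hσ : σ ∈ coveringTransversals E em) :
    IsMinimalVertexCover E (univ.image σ) := by
  refine ⟨hσ.2, fun D hD hDcov => ?_⟩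
  obtain ⟨x, hxσ, hxD⟩ := exists_of_ssubset hD
  obtain ⟨k, -, rfl⟩ := mem_image.mp hxσ
  obtain ⟨y, hy⟩ := hDcov _ (hmem k)
  rw [mem_inter] at hy
  obtain rfl := (mem_image_iff_eq_of_mem hdisj hσ.1 hy.1).mp (hD.subset hy.2)
  exact hxD hy.2

end Transversals

lemma shellable_image_of_exchange {ι α : Type*} [LinearOrder α] {T : Set ι} (hT : T.Finite)
    (Φ : ι → Finset V) (ρ : ι → α) (hρ : Injective ρ)
    (hex : ∀ a ∈ T, ∀ b ∈ T, ρ a < ρ b →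
      ∃ v ∈ Φ b \ Φ a, ∃ c ∈ T, ρ c < ρ b ∧ Φ b \ Φ c = {v}) :
    Shellable (Φ '' T) := by
  classical
  set S := hT.toFinset.image ρ
  set e := S.orderIsoOfFin rfl
  have hS : ∀ j, ∃ a ∈ T, ρ a = e j := fun j => by
    obtain ⟨a, ha, hae⟩ := mem_image.mp (e j).2
    exact ⟨a, hT.mem_toFinset.mp ha, hae⟩
  choose a haT hae using hS
  have hlt : ∀ {i j}, ρ (a i) < ρ (a j) ↔ i < j := by
    intro i j
    rw [hae, hae, Subtype.coe_lt_coe, e.lt_iff_lt]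
  have hidx : ∀ b ∈ T, ∃ l, a l = b := fun b hb => by
    obtain ⟨l, hl⟩ := e.surjective ⟨ρ b, mem_image_of_mem ρ (hT.mem_toFinset.mpr hb)⟩
    exact ⟨l, hρ (by rw [hae, hl])⟩
  refine ⟨S.card, fun j => Φ (a j), fun i j hij => ?_, fun G => ⟨?_, ?_⟩, fun i j hij => ?_⟩
  · by_contra hne
    have hsdiff : ∀ {i j}, Φ (a i) = Φ (a j) → i < j → False := fun hij h => by
      obtain ⟨v, hv, -⟩ := hex _ (haT _) _ (haT _) (hlt.mpr h)
      rw [hij, sdiff_self] at hv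
      exact notMem_empty v hv
    exact (lt_or_gt_of_ne hne).elim (hsdiff hij) (hsdiff hij.symm)
  · rintro ⟨b, hb, rfl⟩
    obtain ⟨l, rfl⟩ := hidx b hb
    exact ⟨l, rfl⟩
  · rintro ⟨j, rfl⟩
    exact ⟨a j, haT j, rfl⟩
  · obtain ⟨v, hv, c, hc, hcj, hjc⟩ := hex _ (haT i) _ (haT j) (hlt.mpr hij)
    obtain ⟨l, rfl⟩ := hidx c hc
    exact ⟨v, hv, l, hlt.mp hcj, hjc⟩

section PerfectMatching

variable {E : Set (Finset V)} {g : ℕ} {em : Fin g → Finset V}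

lemma IsPerfectMatchingKT.pairwise_disjoint (hpm : IsPerfectMatchingKT E em) :
    Pairwise (Disjoint on em) :=
  fun i j hij => hpm.2.1 i j hij

lemma card_inter_eq_one_of_isMinimalVertexCover (hunmixed : Unmixed E)
    (hpm : IsPerfectMatchingKT E em) {M : Finset V} (hM : IsMinimalVertexCover E M) (i : Fin g) :
    (em i ∩ M).card = 1 := by
  have hpos : ∀ j ∈ univ, 1 ≤ (em j ∩ M).card := fun j _ => card_pos.mpr (hM.1 _ (hpm.1 j))
  have hsum : ∑ j : Fin g, 1 = ∑ j, (em j ∩ M).card := by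
    rw [sum_card_inter_eq_card hpm.pairwise_disjoint hpm.2.2.1,
      hunmixed.card_eq_coveringNumber hM, ← hpm.2.2.2, sum_const, card_univ, Fintype.card_fin,
      smul_eq_mul, mul_one]
  exact ((sum_eq_sum_iff_of_le hpos).mp hsum i (mem_univ i)).symm

lemma exists_image_eq_of_isMinimalVertexCover (hunmixed : Unmixed E)
    (hpm : IsPerfectMatchingKT E em) {M : Finset V} (hM : IsMinimalVertexCover E M) :
    ∃ σ : Fin g → V, (∀ i, σ i ∈ em i) ∧ univ.image σ = M := by
  choose σ hσ using fun i =>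
    card_eq_one.mp (card_inter_eq_one_of_isMinimalVertexCover hunmixed hpm hM i)
  have hσM : ∀ i, σ i ∈ em i ∩ M := fun i => hσ i ▸ mem_singleton_self _
  refine ⟨σ, fun i => (mem_inter.mp (hσM i)).1, ?_⟩
  ext x
  refine ⟨fun hx => ?_, fun hx => ?_⟩
  · obtain ⟨i, -, rfl⟩ := mem_image.mp hx
    exact (mem_inter.mp (hσM i)).2
  · obtain ⟨i, hi⟩ := hpm.2.2.1 x
    have : x ∈ em i ∩ M := mem_inter.mpr ⟨hi, hx⟩
    rw [hσ i, mem_singleton] at this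
    exact this ▸ mem_image_of_mem σ (mem_univ i)

lemma cFacets_eq_image_coveringTransversals (hunmixed : Unmixed E)
    (hpm : IsPerfectMatchingKT E em) :
    cFacets E = (fun σ => (univ.image σ)ᶜ) '' coveringTransversals E em := by
  ext F
  simp only [cFacets, Set.mem_ofPred_eq, Set.mem_image, isFacet_iff_isMinimalVertexCover_compl]
  refine ⟨fun hF => ?_, ?_⟩
  · obtain ⟨σ, hσ, himg⟩ := exists_image_eq_of_isMinimalVertexCover hunmixed hpm hF
    exact ⟨σ, ⟨hσ, himg ▸ hF.1⟩, by rw [himg, compl_compl]⟩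
  · rintro ⟨σ, hσ, rfl⟩
    rw [compl_compl]
    exact isMinimalVertexCover_image hpm.1 hpm.pairwise_disjoint hσ

lemma incidentEdges_subset_or_subset (hclut : IsClutter E) (hunmixed : Unmixed E)
    (hpm : IsPerfectMatchingKT E em) (h3 : ¬ HasCycleOfLength E 3)
    (h4 : ¬ HasCycleOfLength E 4) {i : Fin g} {u v : V} (hu : u ∈ em i) (hv : v ∈ em i) :
    incidentEdges E u ⊆ incidentEdges E v ∨ incidentEdges E v ⊆ incidentEdges E u := by
  by_contra! h
  obtain ⟨f, ⟨hf, huf⟩, hvf⟩ := Set.not_subset.mp h.1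
  obtain ⟨f', ⟨hf', hvf'⟩, huf'⟩ := Set.not_subset.mp h.2
  obtain ⟨M, hM, huM, hvM⟩ := exists_isMinimalVertexCover_mem_mem hclut h3 h4 (hpm.1 i) hf hf'
    hu hv huf (fun hv => hvf ⟨hf, hv⟩) hvf' (fun hu => huf' ⟨hf', hu⟩)
  have huv : u = v :=
    card_le_one.mp (card_inter_eq_one_of_isMinimalVertexCover hunmixed hpm hM i).le
      u (mem_inter.mpr ⟨hu, huM⟩) v (mem_inter.mpr ⟨hv, hvM⟩)
  exact hvf ⟨hf, huv ▸ huf⟩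

lemma incidentEdges_subset_of_ncard_le (hclut : IsClutter E) (hunmixed : Unmixed E)
    (hpm : IsPerfectMatchingKT E em) (h3 : ¬ HasCycleOfLength E 3)
    (h4 : ¬ HasCycleOfLength E 4) {i : Fin g} {u v : V} (hu : u ∈ em i) (hv : v ∈ em i)
    (hle : (incidentEdges E v).ncard ≤ (incidentEdges E u).ncard) :
    incidentEdges E v ⊆ incidentEdges E u :=
  (incidentEdges_subset_or_subset hclut hunmixed hpm h3 h4 hu hv).elim
    (fun h => (Set.eq_of_subset_of_ncard_le h hle).symm.subset) id

variable {β : Type*} [LinearOrder β] {κ : V → β}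

lemma exists_sdiff_eq_singleton_of_toLex_lt (hdisj : Pairwise (Disjoint on em))
    (hκ : ∀ i, ∀ u ∈ em i, ∀ v ∈ em i, κ u < κ v → incidentEdges E v ⊆ incidentEdges E u)
    {σ τ : Fin g → V} (hσ : σ ∈ coveringTransversals E em) (hτ : τ ∈ coveringTransversals E em)
    (hlt : toLex (κ ∘ σ) < toLex (κ ∘ τ)) :
    ∃ v ∈ (univ.image τ)ᶜ \ (univ.image σ)ᶜ, ∃ ρ ∈ coveringTransversals E em,
      toLex (κ ∘ ρ) < toLex (κ ∘ τ) ∧ (univ.image τ)ᶜ \ (univ.image ρ)ᶜ = {v} := by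
  obtain ⟨k, -, hk⟩ := hlt
  have hστ : σ k ∉ univ.image τ := fun h =>
    hk.ne (congrArg κ ((mem_image_iff_eq_of_mem hdisj hτ.1 (hσ.1 k)).mp h))
  refine ⟨σ k, ?_, update τ k (σ k),
    ⟨fun i => ?_, hτ.2.image_update (hκ k _ (hσ.1 k) _ (hτ.1 k) hk)⟩, ?_, ?_⟩
  · rw [compl_sdiff_compl, mem_sdiff]
    exact ⟨mem_image_of_mem σ (mem_univ k), hστ⟩
  · by_cases hik : i = k
    · subst hik
      rw [update_self]
      exact hσ.1 i
    · rw [update_of_ne hik]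
      exact hτ.1 i
  · rw [comp_update, Pi.toLex_update_lt_self_iff]
    exact hk
  · rw [compl_sdiff_compl]
    exact image_update_sdiff_image hστ k

lemma shellable_cFacets (hunmixed : Unmixed E) (hpm : IsPerfectMatchingKT E em)
    (hinj : Injective κ)
    (hκ : ∀ i, ∀ u ∈ em i, ∀ v ∈ em i, κ u < κ v → incidentEdges E v ⊆ incidentEdges E u) :
    Shellable (cFacets E) := by
  rw [cFacets_eq_image_coveringTransversals hunmixed hpm]
  exact shellable_image_of_exchange (Set.toFinite _) _ (fun σ => toLex (κ ∘ σ))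
    (toLex.injective.comp hinj.comp_left) fun _ hσ _ hτ =>
      exists_sdiff_eq_singleton_of_toLex_lt hpm.pairwise_disjoint hκ hσ hτ

end PerfectMatching

/-- An unmixed clutter with a perfect matching of König type and without
cycles of length 3 or 4 has a pure shellable independence complex. -/
theorem unmixed_no_small_cycles_pure_shellable
    (E : Set (Finset V)) (hclut : IsClutter E) (hunmixed : Unmixed E)
    {g : ℕ} (em : Fin g → Finset V) (hpm : IsPerfectMatchingKT E em)
    (h3 : ¬ HasCycleOfLength E 3) (h4 : ¬ HasCycleOfLength E 4) :
    PureShellable (cFacets E) := by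
  let κ : V → ℕᵒᵈ ×ₗ Fin (Fintype.card V) :=
    fun u => toLex (OrderDual.toDual (incidentEdges E u).ncard, Fintype.equivFin V u)
  refine ⟨hunmixed.pureFamily_cFacets, shellable_cFacets hunmixed hpm (κ := κ) ?_ ?_⟩
  · exact fun u v h => (Fintype.equivFin V).injective (congrArg (fun x => (ofLex x).2) h)
  · exact fun i u hu v hv h => incidentEdges_subset_of_ncard_le hclut hunmixed hpm h3 h4 hu hv
      (OrderDual.toDual_le_toDual.mp (Prod.Lex.monotone_fst _ _ h.le))
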